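/- arXiv:2002.02701 — 2 statements merged into one kernel-verified Lean document; each statement's English description precedes it below -/
import Mathlib

section
/- (Huang's mode theorem) A point z = (z_1,...,z_m) ∈ A minimises D(X, z) = Σ_{i=1}^N d(X^(i), z) over all points of A if and only if for every coordinate j = 1,...,m and every category a ∈ A_j, the frequency n(z_j) ≥ n(a); i.e. z is a coordinate-wise mode of the dataset. -/
open Finset in
private lemma huang_key {m N : ℕ} {A : Fin m → Type*}
    [∀ j, Fintype (A j)] [∀ j, DecidableEq (A j)]
    (X : Fin N → ∀ j, A j) (u : ∀ j, A j) :
    ∑ i : Fin N, hammingDist (X i) u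
      = ∑ j : Fin m, (N - (Finset.univ.filter (fun i => X i j = u j)).card) := by
  have h1 : ∀ i, hammingDist (X i) u = ∑ j, (if X i j = u j then 0 else 1) := by
    intro i
    rw [hammingDist, Finset.card_filter]
    exact Finset.sum_congr rfl fun j _ => by by_cases h : X i j = u j <;> simp [h]
  calc ∑ i : Fin N, hammingDist (X i) u
      = ∑ i : Fin N, ∑ j, (if X i j = u j then 0 else 1) :=
        Finset.sum_congr rfl fun i _ => h1 i
    _ = ∑ j, ∑ i : Fin N, (if X i j = u j then 0 else 1) := Finset.sum_comm
    _ = ∑ j : Fin m, (N - (Finset.univ.filter (fun i => X i j = u j)).card) := by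
        refine Finset.sum_congr rfl fun j _ => ?_
        have hadd := Finset.card_filter_add_card_filter_not
          (s := (Finset.univ : Finset (Fin N))) (p := fun i => X i j = u j)
        have h2 : ∑ i : Fin N, (if X i j = u j then 0 else 1)
            = (Finset.univ.filter (fun i => ¬ X i j = u j)).card := by
          rw [Finset.card_filter]
          exact Finset.sum_congr rfl fun i _ => by by_cases h : X i j = u j <;> simp [h]
        simp only [Finset.card_univ, Fintype.card_fin] at hadd
        omega

open Finset in
/-- Huang's mode theorem: `z` minimises `D(𝒳, ·) = Σ_i d(X^(i), ·)` over the
attribute space iff for every coordinate `j` and every category `a ∈ A_j`, the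
frequency `n(a)` is at most the frequency `n(z_j)`; i.e. `z` is a
coordinate-wise mode of the dataset. -/
theorem huang_mode_theorem {m N : ℕ} (hN : 1 ≤ N) {A : Fin m → Type*}
    [∀ j, Fintype (A j)] [∀ j, DecidableEq (A j)] [∀ j, Nonempty (A j)]
    (X : Fin N → ∀ j, A j) (z : ∀ j, A j) :
    (∀ u : (∀ j, A j),
        ∑ i : Fin N, hammingDist (X i) z ≤ ∑ i : Fin N, hammingDist (X i) u) ↔
    (∀ j : Fin m, ∀ a : A j,
        (Finset.univ.filter (fun i => X i j = a)).card ≤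
        (Finset.univ.filter (fun i => X i j = z j)).card) := by
  constructor
  · intro h j a
    have hu := h (Function.update z j a)
    rw [huang_key, huang_key] at hu
    set f : Fin m → ℕ := fun j' =>
      N - (Finset.univ.filter (fun i => X i j' = z j')).card with hf
    set g : Fin m → ℕ := fun j' =>
      N - (Finset.univ.filter (fun i => X i j' = Function.update z j a j')).card with hg
    have hz := Finset.add_sum_erase Finset.univ f (Finset.mem_univ j)
    have hu' := Finset.add_sum_erase Finset.univ g (Finset.mem_univ j)
    have heq : ∑ j' ∈ Finset.univ.erase j, f j' = ∑ j' ∈ Finset.univ.erase j, g j' := by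
      refine Finset.sum_congr rfl fun j' hj' => ?_
      have hne : j' ≠ j := Finset.ne_of_mem_erase hj'
      simp [hf, hg, Function.update_of_ne hne]
    rw [← hz, ← hu', heq] at hu
    have hfg : f j ≤ g j := by omega
    have hgj : g j = N - (Finset.univ.filter (fun i => X i j = a)).card := by
      simp [hg, Function.update_self]
    have hca : (Finset.univ.filter (fun i => X i j = a)).card ≤ N := by
      simpa using Finset.card_filter_le Finset.univ (fun i => X i j = a)
    have hcz : (Finset.univ.filter (fun i => X i j = z j)).card ≤ N := by
      simpa using Finset.card_filter_le Finset.univ (fun i => X i j = z j)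
    simp only [hf] at hfg
    omega
  · intro h u
    rw [huang_key, huang_key]
    exact Finset.sum_le_sum fun j _ => Nat.sub_le_sub_left (h j (u j)) N
end

section
/- Replacing each cluster centroid by a coordinate-wise mode of its cluster never increases the cost function: if z'^(l) is a coordinate-wise mode of Z_l for each l, then Σ_l D(Z_l, z'^(l)) ≤ Σ_l D(Z_l, z^(l)) for any choice of centroids z^(l) ∈ A. -/
open Finset

lemma sum_ite_ne_eq {m : ℕ} {A : Fin m → Type*} [∀ j, DecidableEq (A j)]
    (S : Finset (∀ j, A j)) (j : Fin m) (c : A j) :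
    ∑ x ∈ S, (if x j = c then 0 else 1) = S.card - (S.filter (fun x => x j = c)).card := by
  have h1 : ∀ x ∈ S, (if x j = c then 0 else 1) = (if ¬(x j = c) then 1 else 0) := by
    intro x _; by_cases h : x j = c <;> simp [h]
  rw [Finset.sum_congr rfl h1, ← Finset.card_filter]
  simp [Finset.filter_not, Finset.card_sdiff_of_subset (Finset.filter_subset _ _)]

open Finset in
/-- Replacing each cluster centroid by a coordinate-wise mode of its cluster
never increases the cost: if `z' l` is a coordinate-wise mode of the cluster
`Z l` for each `l`, then `Σ_l D(Z_l, z'_l) ≤ Σ_l D(Z_l, z_l)` for any choice of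
centroids `z l`. -/
theorem update_modes_nonincreasing {m k : ℕ} {A : Fin m → Type*}
    [∀ j, Fintype (A j)] [∀ j, DecidableEq (A j)] [∀ j, Nonempty (A j)]
    (Z : Fin k → Finset (∀ j, A j)) (hZ : ∀ l, (Z l).Nonempty)
    (z z' : Fin k → ∀ j, A j)
    (hz' : ∀ l : Fin k, ∀ j : Fin m, ∀ a : A j,
        ((Z l).filter (fun x => x j = a)).card ≤
        ((Z l).filter (fun x => x j = z' l j)).card) :
    ∑ l : Fin k, ∑ x ∈ Z l, hammingDist x (z' l) ≤
    ∑ l : Fin k, ∑ x ∈ Z l, hammingDist x (z l) := by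
  refine Finset.sum_le_sum fun l _ => ?_
  have key : ∀ w : ∀ j, A j, ∑ x ∈ Z l, hammingDist x w =
      ∑ j : Fin m, ∑ x ∈ Z l, (if x j = w j then 0 else 1) := by
    intro w
    rw [Finset.sum_comm]
    refine Finset.sum_congr rfl fun x _ => ?_
    simp [hammingDist, Finset.card_filter, eq_comm]
  rw [key, key]
  refine Finset.sum_le_sum fun j _ => ?_
  rw [sum_ite_ne_eq, sum_ite_ne_eq]
  exact Nat.sub_le_sub_left (hz' l j (z l j)) _
end
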